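/- R_{1,3} = ∑_{n≥1} H_{n-1}/(n−1/2)³ = −14·ln(2)·ζ(3) + π⁴/8. -/

import Mathlib

/-- odd harmonic numbers of order r: h_n^{(r)} = ∑_{k=1}^n 1/(k-1/2)^r -/
noncomputable def oddH (r n : ℕ) : ℝ := ∑ k ∈ Finset.range n, (((k : ℝ) + 1/2) ^ r)⁻¹

/-- generalized harmonic numbers of order r: H_n^{(r)} = ∑_{k=1}^n 1/k^r -/
noncomputable def genH (r n : ℕ) : ℝ := ∑ k ∈ Finset.range n, (((k : ℝ) + 1) ^ r)⁻¹

/-- T_{p,q} = ∑_{n≥1} h_{n-1}^{(p)}/(n-1/2)^q -/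
noncomputable def Tsum (p q : ℕ) : ℝ := ∑' n : ℕ, oddH p n / ((n : ℝ) + 1/2) ^ q

/-- S̃_{p,q} = ∑_{n≥1} h_n^{(p)}/n^q -/
noncomputable def Ssum (p q : ℕ) : ℝ := ∑' n : ℕ, oddH p (n + 1) / ((n : ℝ) + 1) ^ q

/-- R_{p,q} = ∑_{n≥1} H_{n-1}^{(p)}/(n-1/2)^q -/
noncomputable def Rsum (p q : ℕ) : ℝ := ∑' n : ℕ, genH p n / ((n : ℝ) + 1/2) ^ q

/-- t̃(s) = ∑_{n≥1} 1/(n-1/2)^s -/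
noncomputable def ttv (s : ℕ) : ℝ := ∑' n : ℕ, (((n : ℝ) + 1/2) ^ s)⁻¹

/-- ζ(s) = ∑_{n≥1} 1/n^s (for integer s ≥ 2) -/
noncomputable def zv (s : ℕ) : ℝ := ∑' n : ℕ, (((n : ℝ) + 1) ^ s)⁻¹

/-!
Writing `H_{n-1} = ∑_{k<n} 1/(k+1)` and `n = k + i + 1`, `R_{1,3}` is the double series of the
nonnegative terms `1/((k+1)(k+i+3/2)^3)`, which may be summed in `k` first. With `a = i + 1/2`, the
partial fraction decomposition of `1/(x(x+a)^3)` evaluates the inner sum in terms of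
`h_{i+1}^{(1)} - 2 log 2` (from `∑ (1/(k+1/2) - 1/(k+1)) = 2 log 2`) and the tails
`t̃(2) - h_{i+1}^{(2)}`, `t̃(3) - h_{i+1}^{(3)}`. The outer sums are triangular double series;
exchanging their order gives `∑ (h_{i+1}^{(1)}/a^3 - (t̃(3) - h_{i+1}^{(3)})/a) = t̃(4)` and
`∑ (t̃(2) - h_{i+1}^{(2)})/a^2 = (t̃(2)^2 - t̃(4))/2`. Finally `t̃(s) = (2^s - 1) ζ(s)`.
-/

open Filter Topology Finset

section Tonelli

variable {β : Type*}

theorem HasSum.of_sigma_of_nonneg {γ : β → Type*} {f : (Σ b, γ b) → ℝ} {g : β → ℝ} {a : ℝ}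
    (hf : ∀ x, 0 ≤ f x) (hfib : ∀ b, HasSum (fun c => f ⟨b, c⟩) (g b)) (hg : HasSum g a) :
    HasSum f a := by
  have hs : Summable f := (summable_sigma_of_nonneg hf).2
    ⟨fun b => (hfib b).summable, hg.summable.congr fun b => ((hfib b).tsum_eq).symm⟩
  rw [hg.unique (hs.hasSum.sigma hfib)]
  exact hs.hasSum

theorem HasSum.of_prod_fiberwise_of_nonneg {γ : Type*} {f : β × γ → ℝ} {g : β → ℝ} {a : ℝ}
    (hf : ∀ x, 0 ≤ f x) (hfib : ∀ b, HasSum (fun c => f (b, c)) (g b)) (hg : HasSum g a) :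
    HasSum f a :=
  (Equiv.sigmaEquivProd β γ).hasSum_iff.1 (HasSum.of_sigma_of_nonneg (fun _ => hf _) hfib hg)

theorem HasSum.prod_swap_fiberwise {γ : Type*} {f : β × γ → ℝ} {g : γ → ℝ} {a : ℝ}
    (hf : HasSum f a) (hg : ∀ c, HasSum (fun b => f (b, c)) (g c)) : HasSum g a :=
  ((Equiv.prodComm γ β).hasSum_iff.2 hf).prod_fiberwise hg

end Tonelli

theorem hasSum_mul_tail_of_hasSum_mul_sum_range {f g : ℕ → ℝ} {A B : ℝ} (hf : ∀ n, 0 ≤ f n)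
    (hg : ∀ n, 0 ≤ g n) (hA : HasSum f A)
    (hB : HasSum (fun j => f j * ∑ i ∈ range j, g i) B) :
    HasSum (fun i => g i * (A - ∑ j ∈ range (i + 1), f j)) B := by
  let F : ℕ × ℕ → ℝ := fun p => if p.2 < p.1 then f p.1 * g p.2 else 0
  have hcol : ∀ j, HasSum (fun i => F (j, i)) (f j * ∑ i ∈ range j, g i) := by
    intro j
    have h : HasSum (fun i => F (j, i)) (∑ i ∈ range j, F (j, i)) :=
      hasSum_sum_of_ne_finset_zero fun i hi => if_neg (by simpa using hi)
    convert h using 1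
    rw [mul_sum]
    exact sum_congr rfl fun i hi => (if_pos (mem_range.1 hi)).symm
  have hrow : ∀ i, HasSum (fun j => F (j, i)) (g i * (A - ∑ j ∈ range (i + 1), f j)) := by
    intro i
    refine (hasSum_nat_add_iff' (i + 1)).1 ?_
    have hzero : ∑ j ∈ range (i + 1), F (j, i) = 0 :=
      sum_eq_zero fun j hj => if_neg (by simp only [mem_range] at hj; omega)
    rw [hzero, sub_zero]
    refine (((hasSum_nat_add_iff' (i + 1)).2 hA).mul_left (g i)).congr_fun fun n => ?_
    exact (if_pos (by omega)).trans (mul_comm _ _)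
  refine (HasSum.of_prod_fiberwise_of_nonneg (fun p => ?_) hcol hB).prod_swap_fiberwise hrow
  show (0:ℝ) ≤ (if _ then _ else _)
  split_ifs
  exacts [mul_nonneg (hf _) (hg _), le_rfl]

theorem hasSum_sub_shift_of_antitone {a : ℕ → ℝ} (ha : Antitone a) (h0 : Tendsto a atTop (𝓝 0))
    (m : ℕ) : HasSum (fun k => a k - a (k + m)) (∑ k ∈ range m, a k) := by
  have hpartial : ∀ N, ∑ k ∈ range N, (a k - a (k + m))
      = ∑ k ∈ range m, a k - ∑ k ∈ range m, a (N + k) := by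
    intro N
    have h := sum_range_add a N m
    rw [add_comm N m, sum_range_add] at h
    simp only [sum_sub_distrib, add_comm _ m]
    linarith
  rw [hasSum_iff_tendsto_nat_of_nonneg fun k => sub_nonneg.2 (ha (Nat.le_add_right k m))]
  have htail : Tendsto (fun N => ∑ k ∈ range m, a (N + k)) atTop (𝓝 0) := by
    simpa using tendsto_finsetSum (range m) fun k _ => h0.comp (tendsto_add_atTop_nat k)
  simpa [hpartial] using tendsto_const_nhds.sub htail

theorem summable_inv_add_pow {c : ℝ} (hc : 0 ≤ c) {s : ℕ} (hs : 2 ≤ s) :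
    Summable fun n : ℕ => (((n : ℝ) + c) ^ s)⁻¹ := by
  refine ((Real.summable_one_div_nat_add_rpow c s).2 (by exact_mod_cast hs)).congr fun n => ?_
  rw [abs_of_nonneg (by positivity), Real.rpow_natCast, one_div]

theorem hasSum_ttv {s : ℕ} (hs : 2 ≤ s) : HasSum (fun n : ℕ => (((n : ℝ) + 1/2) ^ s)⁻¹) (ttv s) :=
  (summable_inv_add_pow (by norm_num) hs).hasSum

theorem hasSum_zv {s : ℕ} (hs : 2 ≤ s) : HasSum (fun n : ℕ => (((n : ℝ) + 1) ^ s)⁻¹) (zv s) :=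
  (summable_inv_add_pow zero_le_one hs).hasSum

theorem zv_eq_of_hasSum {s : ℕ} (hs : s ≠ 0) {x : ℝ} (h : HasSum (fun n : ℕ => 1 / (n : ℝ) ^ s) x) :
    zv s = x := by
  have h1 := (hasSum_nat_add_iff' 1).2 h
  simp only [sum_range_one, Nat.cast_zero, zero_pow hs, one_div, inv_zero, sub_zero, Nat.cast_add,
    Nat.cast_one] at h1
  exact h1.tsum_eq

theorem ttv_eq_mul_zv {s : ℕ} (hs : 2 ≤ s) : ttv s = (2 ^ s - 1) * zv s := by
  have h := hasSum_zv hs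
  have heven : HasSum (fun k : ℕ => ((((2 * k : ℕ) : ℝ) + 1) ^ s)⁻¹) ((2 ^ s)⁻¹ * ttv s) := by
    refine ((hasSum_ttv hs).mul_left _).congr_fun fun k => ?_
    rw [← mul_inv, ← mul_pow]; push_cast; ring_nf
  have hodd : HasSum (fun k : ℕ => ((((2 * k + 1 : ℕ) : ℝ) + 1) ^ s)⁻¹) ((2 ^ s)⁻¹ * zv s) := by
    refine (h.mul_left _).congr_fun fun k => ?_
    rw [← mul_inv, ← mul_pow]; push_cast; ring_nf
  have := h.unique (heven.even_add_odd hodd)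
  field_simp at this
  linarith

theorem zv_two : zv 2 = Real.pi ^ 2 / 6 := zv_eq_of_hasSum two_ne_zero hasSum_zeta_two

theorem zv_four : zv 4 = Real.pi ^ 4 / 90 := zv_eq_of_hasSum four_ne_zero hasSum_zeta_four

theorem hasSum_ttv_tail {s : ℕ} (hs : 2 ≤ s) (m : ℕ) :
    HasSum (fun k : ℕ => ((((k + m : ℕ) : ℝ) + 1/2) ^ s)⁻¹) (ttv s - oddH s m) :=
  (hasSum_nat_add_iff' m).2 (hasSum_ttv hs)

theorem oddH_le_ttv {s : ℕ} (hs : 2 ≤ s) (m : ℕ) : oddH s m ≤ ttv s :=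
  sub_nonneg.1 ((hasSum_ttv_tail hs m).nonneg fun _ => by positivity)

theorem oddH_succ (r n : ℕ) : oddH r (n + 1) = oddH r n + (((n : ℝ) + 1/2) ^ r)⁻¹ :=
  sum_range_succ _ _

theorem oddH_nonneg (r n : ℕ) : 0 ≤ oddH r n :=
  sum_nonneg fun _ _ => by positivity

theorem genH_le_oddH (r n : ℕ) : genH r n ≤ oddH r n :=
  sum_le_sum fun k _ => inv_anti₀ (by positivity) (pow_le_pow_left₀ (by positivity) (by linarith) r)

theorem oddH_one_le (n : ℕ) : oddH 1 n ≤ 2 * n := by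
  calc oddH 1 n ≤ ∑ _k ∈ range n, (2 : ℝ) := sum_le_sum fun k _ => by
        rw [pow_one, inv_le_comm₀ (by positivity) two_pos]; linarith [(k.cast_nonneg : (0:ℝ) ≤ k)]
    _ = 2 * n := by rw [sum_const, card_range, nsmul_eq_mul, mul_comm]

theorem sum_range_inv_add_half_sub_inv_add_one (N : ℕ) :
    ∑ k ∈ range N, (((k : ℝ) + 1/2)⁻¹ - ((k : ℝ) + 1)⁻¹)
      = 2 * ((harmonic (2 * N) : ℝ) - harmonic N) := by
  induction N with
  | zero => simp
  | succ N ih =>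
    rw [sum_range_succ, ih, show 2 * (N + 1) = 2 * N + 1 + 1 by ring, harmonic_succ,
      harmonic_succ, harmonic_succ]
    push_cast
    field_simp
    ring

theorem tendsto_harmonic_two_mul_sub_harmonic :
    Tendsto (fun N : ℕ => (harmonic (2 * N) : ℝ) - harmonic N) atTop (𝓝 (Real.log 2)) := by
  have h2N : Tendsto (fun N : ℕ => (harmonic (2 * N) : ℝ) - Real.log ↑(2 * N)) atTop
      (𝓝 Real.eulerMascheroniConstant) :=
    Real.tendsto_harmonic_sub_log.comp (tendsto_id.const_mul_atTop' two_pos)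
  have := (h2N.sub Real.tendsto_harmonic_sub_log).add_const (Real.log 2)
  rw [sub_self, zero_add] at this
  refine this.congr' ?_
  filter_upwards [eventually_ne_atTop 0] with N hN
  rw [Nat.cast_mul, Nat.cast_ofNat, Real.log_mul two_ne_zero (Nat.cast_ne_zero.2 hN)]
  ring

theorem hasSum_inv_add_half_sub_inv_add_one :
    HasSum (fun k : ℕ => ((k : ℝ) + 1/2)⁻¹ - ((k : ℝ) + 1)⁻¹) (2 * Real.log 2) := by
  rw [hasSum_iff_tendsto_nat_of_nonneg fun k => sub_nonneg.2 <|
    inv_anti₀ (by positivity) (by linarith)]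
  simpa only [sum_range_inv_add_half_sub_inv_add_one] using
    tendsto_harmonic_two_mul_sub_harmonic.const_mul 2

theorem inv_div_cube_eq_partial_fractions {x y a : ℝ} (hx : x ≠ 0) (hy : y ≠ 0) (ha : a ≠ 0)
    (h : y = x + a) :
    x⁻¹ / y ^ 3 = (x⁻¹ - y⁻¹) / a ^ 3 - (y ^ 2)⁻¹ / a ^ 2 - (y ^ 3)⁻¹ / a := by
  subst h
  field_simp
  ring

theorem hasSum_inv_add_one_sub_inv_add_half_shift (m : ℕ) :
    HasSum (fun k : ℕ => ((k : ℝ) + 1)⁻¹ - (((k + m : ℕ) : ℝ) + 1/2)⁻¹)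
      (oddH 1 m - 2 * Real.log 2) := by
  have htel := hasSum_sub_shift_of_antitone (a := fun k : ℕ => ((k : ℝ) + 1/2)⁻¹)
    (fun j k hjk => inv_anti₀ (by positivity) (by gcongr))
    (tendsto_inv_atTop_zero.comp (tendsto_atTop_add_const_right _ _ tendsto_natCast_atTop_atTop)) m
  rw [show oddH 1 m = ∑ k ∈ range m, ((k : ℝ) + 1/2)⁻¹ by simp only [oddH, pow_one]]
  exact (htel.sub hasSum_inv_add_half_sub_inv_add_one).congr_fun fun k => by ring

theorem hasSum_inv_add_one_div_cube_shift (i : ℕ) :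
    HasSum (fun k : ℕ => ((k : ℝ) + 1)⁻¹ / (((k + (i + 1) : ℕ) : ℝ) + 1/2) ^ 3)
      ((oddH 1 (i + 1) - 2 * Real.log 2) / ((i : ℝ) + 1/2) ^ 3
        - (ttv 2 - oddH 2 (i + 1)) / ((i : ℝ) + 1/2) ^ 2
        - (ttv 3 - oddH 3 (i + 1)) / ((i : ℝ) + 1/2)) :=
  (((hasSum_inv_add_one_sub_inv_add_half_shift (i + 1)).div_const _).sub
    ((hasSum_ttv_tail (s := 2) le_rfl (i + 1)).div_const _)).sub
    ((hasSum_ttv_tail (s := 3) (by norm_num) (i + 1)).div_const _) |>.congr_fun fun k =>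
      inv_div_cube_eq_partial_fractions (by positivity) (by positivity) (by positivity)
        (by push_cast; ring)

theorem summable_inv_cube_mul_oddH_one :
    Summable fun j : ℕ => (((j : ℝ) + 1/2) ^ 3)⁻¹ * oddH 1 j := by
  refine Summable.of_nonneg_of_le (fun j => mul_nonneg (by positivity) (oddH_nonneg 1 j))
    (fun j => ?_) ((summable_inv_add_pow (c := 1/2) (by norm_num) le_rfl).mul_left 2)
  calc (((j : ℝ) + 1/2) ^ 3)⁻¹ * oddH 1 j ≤ (((j : ℝ) + 1/2) ^ 3)⁻¹ * (2 * ((j : ℝ) + 1/2)) :=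
        mul_le_mul_of_nonneg_left (by linarith [oddH_one_le j]) (by positivity)
    _ = 2 * (((j : ℝ) + 1/2) ^ 2)⁻¹ := by field_simp

theorem hasSum_oddH_one_div_cube_sub_tail :
    HasSum (fun i : ℕ => oddH 1 (i + 1) / ((i : ℝ) + 1/2) ^ 3
      - (ttv 3 - oddH 3 (i + 1)) / ((i : ℝ) + 1/2)) (ttv 4) := by
  have hB := summable_inv_cube_mul_oddH_one.hasSum
  -- the exponent `1` makes `∑ i ∈ range j, g i` literally `oddH 1 j`, as `hB` requires
  have htail : HasSum (fun i : ℕ => (((i : ℝ) + 1/2) ^ 1)⁻¹ * (ttv 3 - oddH 3 (i + 1))) _ :=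
    hasSum_mul_tail_of_hasSum_mul_sum_range (fun _ => by positivity) (fun _ => by positivity)
      (hasSum_ttv (by norm_num)) hB
  have h := (hB.add (hasSum_ttv (s := 4) (by norm_num))).sub htail
  rw [add_sub_cancel_left] at h
  refine h.congr_fun fun i => ?_
  rw [oddH_succ 1 i]
  field_simp

theorem summable_inv_sq_mul_oddH_two :
    Summable fun j : ℕ => (((j : ℝ) + 1/2) ^ 2)⁻¹ * oddH 2 j :=
  Summable.of_nonneg_of_le (fun j => mul_nonneg (by positivity) (oddH_nonneg 2 j))
    (fun j => mul_le_mul_of_nonneg_left (oddH_le_ttv le_rfl j) (by positivity))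
    ((summable_inv_add_pow (c := 1/2) (by norm_num) le_rfl).mul_right (ttv 2))

theorem hasSum_tail_two_div_sq :
    HasSum (fun i : ℕ => (ttv 2 - oddH 2 (i + 1)) / ((i : ℝ) + 1/2) ^ 2)
      ((ttv 2 ^ 2 - ttv 4) / 2) := by
  have hB := summable_inv_sq_mul_oddH_two.hasSum
  have htail : HasSum (fun i : ℕ => (((i : ℝ) + 1/2) ^ 2)⁻¹ * (ttv 2 - oddH 2 (i + 1))) _ :=
    hasSum_mul_tail_of_hasSum_mul_sum_range (fun _ => by positivity) (fun _ => by positivity)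
      (hasSum_ttv le_rfl) hB
  have hsq := ((hasSum_ttv (s := 2) le_rfl).mul_left (ttv 2)).sub
    (hasSum_ttv (s := 4) (by norm_num))
  have hB2 := (htail.add hB).unique (hsq.congr_fun fun i => by
    rw [oddH_succ 2 i]
    field_simp
    ring)
  rw [show (ttv 2 ^ 2 - ttv 4) / 2 = ∑' j : ℕ, (((j : ℝ) + 1/2) ^ 2)⁻¹ * oddH 2 j by linarith]
  exact htail.congr_fun fun i => div_eq_inv_mul _ _

theorem hasSum_genH_one_div_cube_succ :
    HasSum (fun m : ℕ => genH 1 (m + 1) / (((m + 1 : ℕ) : ℝ) + 1/2) ^ 3) (Rsum 1 3) := by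
  have hs : Summable fun n : ℕ => genH 1 n / ((n : ℝ) + 1/2) ^ 3 :=
    summable_inv_cube_mul_oddH_one.of_nonneg_of_le
      (fun n => div_nonneg (sum_nonneg fun _ _ => by positivity) (by positivity))
      (fun n => by rw [div_eq_inv_mul]; gcongr; exact genH_le_oddH 1 n)
  have h := (hasSum_nat_add_iff' 1).2 hs.hasSum
  rwa [sum_range_one, show genH 1 0 = 0 from sum_range_zero _, zero_div, sub_zero] at h

theorem hasSum_rsum_one_three :
    HasSum (fun i : ℕ => (oddH 1 (i + 1) - 2 * Real.log 2) / ((i : ℝ) + 1/2) ^ 3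
        - (ttv 2 - oddH 2 (i + 1)) / ((i : ℝ) + 1/2) ^ 2
        - (ttv 3 - oddH 3 (i + 1)) / ((i : ℝ) + 1/2)) (Rsum 1 3) := by
  let G : ℕ × ℕ → ℝ := fun p => ((p.1 : ℝ) + 1)⁻¹ / (((p.1 + (p.2 + 1) : ℕ) : ℝ) + 1/2) ^ 3
  have hfib : ∀ m, HasSum (fun x : antidiagonal m => G x)
      (genH 1 (m + 1) / (((m + 1 : ℕ) : ℝ) + 1/2) ^ 3) := by
    intro m
    convert hasSum_fintype (fun x : antidiagonal m => G x) using 1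
    rw [sum_coe_sort (antidiagonal m) G, Nat.sum_antidiagonal_eq_sum_range_succ_mk, genH, sum_div]
    refine sum_congr rfl fun k hk => ?_
    simp only [G, pow_one]
    rw [show k + (m - k + 1) = m + 1 by grind]
  have hG : HasSum G (Rsum 1 3) := HasAntidiagonal.sigmaAntidiagonalEquivProd.hasSum_iff.1
    (HasSum.of_sigma_of_nonneg (fun _ => div_nonneg (by positivity) (by positivity)) hfib
      hasSum_genH_one_div_cube_succ)
  exact hG.prod_swap_fiberwise hasSum_inv_add_one_div_cube_shift

theorem stmt5 : Rsum 1 3 = -14 * Real.log 2 * zv 3 + Real.pi ^ 4 / 8 := by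
  have hsum := ((hasSum_oddH_one_div_cube_sub_tail.sub
    ((hasSum_ttv (s := 3) (by norm_num)).mul_left (2 * Real.log 2))).sub hasSum_tail_two_div_sq)
  rw [hasSum_rsum_one_three.unique (hsum.congr_fun fun i => by ring)]
  have ht2 : ttv 2 = Real.pi ^ 2 / 2 := by rw [ttv_eq_mul_zv le_rfl, zv_two]; ring
  have ht3 : ttv 3 = 7 * zv 3 := by rw [ttv_eq_mul_zv (by norm_num)]; norm_num
  have ht4 : ttv 4 = Real.pi ^ 4 / 6 := by rw [ttv_eq_mul_zv (by norm_num), zv_four]; ring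
  rw [ht2, ht3, ht4]
  ring
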